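/- arXiv:1306.2437 — 3 statements merged into one kernel-verified Lean document; each statement's English description precedes it below -/
import Mathlib

section
/- For any subset S of vertices of the n-dimensional hypercube graph with |S| < 2^n/(n^2+1), the largest connected component of the complement V \ S has more than 2^{n-1} vertices. -/
/-!
Edge isoperimetry of the cube: for every `A ⊆ {0,1}^n`, `2 |A| |Aᶜ| ≤ 2^n |∂A|`, where `∂A` is the
set of pairs `(x, i)` with `x ∈ A` and `x` flipped at `i` outside `A`. It follows by induction on
`n`, splitting the cube along the first coordinate into two subcubes.

If every component `C` of `V \ S` had at most `2^(n-1)` vertices, isoperimetry would give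
`|C| ≤ |∂C|` for each of them. Since a component is closed under adjacency within `V \ S`, the
boundaries `∂C` partition `∂(V \ S)`, which has as many elements as `∂S`, at most `n |S|`.
Hence `2^n - |S| ≤ n |S|`, i.e. `2^n ≤ (n + 1) |S| ≤ (n² + 1) |S|`, against the bound on `|S|`.
-/

def flipAt (n : ℕ) (s : Fin n → Bool) (i : Fin n) : Fin n → Bool :=
  Function.update s i (!(s i))

def cube (n : ℕ) : SimpleGraph (Fin n → Bool) :=
  SimpleGraph.fromRel (fun s t => ∃ i, t = flipAt n s i)

def IsCompOf (n : ℕ) (A C : Set (Fin n → Bool)) : Prop :=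
  C.Nonempty ∧ C ⊆ A ∧ ((cube n).induce C).Connected ∧
    ∀ D, C ⊆ D → D ⊆ A → ((cube n).induce D).Connected → D = C

open Finset

@[simp]
lemma flipAt_flipAt (n : ℕ) (x : Fin n → Bool) (i : Fin n) : flipAt n (flipAt n x i) i = x := by
  simp [flipAt]

lemma flipAt_ne (n : ℕ) (x : Fin n → Bool) (i : Fin n) : flipAt n x i ≠ x :=
  fun h ↦ by simpa [flipAt] using congrFun h i

lemma cube_adj_flipAt (n : ℕ) (x : Fin n → Bool) (i : Fin n) : (cube n).Adj x (flipAt n x i) := by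
  rw [cube, SimpleGraph.fromRel_adj]
  exact ⟨(flipAt_ne n x i).symm, Or.inl ⟨i, rfl⟩⟩

lemma flipAt_cons_zero (n : ℕ) (b : Bool) (y : Fin n → Bool) :
    flipAt (n + 1) (Fin.cons b y) 0 = Fin.cons (!b) y := by
  simp [flipAt, Fin.update_cons_zero]

lemma flipAt_cons_succ (n : ℕ) (b : Bool) (y : Fin n → Bool) (i : Fin n) :
    flipAt (n + 1) (Fin.cons b y) i.succ = Fin.cons b (flipAt n y i) := by
  simp [flipAt, Fin.cons_update]

namespace Hypercube

variable {n : ℕ}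

def edgeBoundary (A : Finset (Fin n → Bool)) : Finset ((Fin n → Bool) × Fin n) :=
  {p | p.1 ∈ A ∧ flipAt n p.1 p.2 ∉ A}

@[simp]
lemma mem_edgeBoundary {A : Finset (Fin n → Bool)} {p : (Fin n → Bool) × Fin n} :
    p ∈ edgeBoundary A ↔ p.1 ∈ A ∧ flipAt n p.1 p.2 ∉ A := by
  simp [edgeBoundary]

lemma card_edgeBoundary_eq_sum (A : Finset (Fin n → Bool)) :
    #(edgeBoundary A) = ∑ i, #{x ∈ A | flipAt n x i ∉ A} := by
  simp only [edgeBoundary, card_filter, Fintype.sum_prod_type_right, ite_and, sum_ite_mem,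
    univ_inter]

lemma card_edgeBoundary_le (A : Finset (Fin n → Bool)) : #(edgeBoundary A) ≤ #A * n := by
  calc #(edgeBoundary A) ≤ #(A ×ˢ (univ : Finset (Fin n))) :=
        card_le_card fun p hp ↦ by simp_all
    _ = #A * n := by simp

lemma card_edgeBoundary_compl (A : Finset (Fin n → Bool)) :
    #(edgeBoundary Aᶜ) = #(edgeBoundary A) := by
  refine card_nbij' (fun p ↦ (flipAt n p.1 p.2, p.2)) (fun p ↦ (flipAt n p.1 p.2, p.2))
    ?_ ?_ ?_ ?_ <;> simp_all [Set.MapsTo, Set.LeftInvOn]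

lemma card_filter_cons (P : (Fin (n + 1) → Bool) → Prop) [DecidablePred P] :
    #{x | P x} = #{y | P (Fin.cons false y)} + #{y | P (Fin.cons true y)} := by
  simp only [card_filter]
  rw [← (Fin.consEquiv fun _ ↦ Bool).sum_comp, Fintype.sum_prod_type, Fintype.sum_bool, add_comm]
  rfl

def slice (b : Bool) (A : Finset (Fin (n + 1) → Bool)) : Finset (Fin n → Bool) :=
  {y | Fin.cons b y ∈ A}

lemma card_eq_card_slice_add (A : Finset (Fin (n + 1) → Bool)) :
    #A = #(slice false A) + #(slice true A) := by
  simpa [slice] using card_filter_cons (· ∈ A)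

lemma card_edgeBoundary_succ (A : Finset (Fin (n + 1) → Bool)) :
    #(edgeBoundary A) = #(slice false A \ slice true A) + #(slice true A \ slice false A) +
      (#(edgeBoundary (slice false A)) + #(edgeBoundary (slice true A))) := by
  simp only [card_edgeBoundary_eq_sum, Fin.sum_univ_succ, ← sum_add_distrib]
  congr 1
  · rw [← filter_univ_mem A, filter_filter, card_filter_cons]
    simp [flipAt_cons_zero, slice, sdiff_eq_filter, filter_filter]
  · refine sum_congr rfl fun i _ ↦ ?_
    rw [← filter_univ_mem A, filter_filter, card_filter_cons]
    simp [flipAt_cons_succ, slice, filter_filter]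

lemma isoperimetric_step {N a₀ a₁ f₀ f₁ d : ℤ} (h₀ : 2 * a₀ * (N - a₀) ≤ N * f₀)
    (h₁ : 2 * a₁ * (N - a₁) ≤ N * f₁) (hd : |a₀ - a₁| ≤ d) (hN : |a₀ - a₁| ≤ N) :
    2 * (a₀ + a₁) * (2 * N - (a₀ + a₁)) ≤ 2 * N * (d + (f₀ + f₁)) := by
  -- the inductive bounds fall short of the claim by exactly `2 (a₀ - a₁)²`
  have hsq : (a₀ - a₁) ^ 2 ≤ N * d := by
    rw [← sq_abs, sq]
    exact mul_le_mul hN hd (abs_nonneg _) ((abs_nonneg _).trans hN)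
  nlinarith

lemma card_le_two_pow (A : Finset (Fin n → Bool)) : #A ≤ 2 ^ n := by
  simpa using card_le_univ A

lemma cast_card_compl (A : Finset (Fin n → Bool)) : (#Aᶜ : ℤ) = 2 ^ n - #A := by
  rw [card_compl, Nat.cast_sub (card_le_univ A)]
  simp

theorem two_mul_card_mul_card_compl_le (A : Finset (Fin n → Bool)) :
    2 * #A * #Aᶜ ≤ 2 ^ n * #(edgeBoundary A) := by
  induction n with
  | zero =>
    have : #A + #Aᶜ = 1 := by simp
    obtain h | h : #A = 0 ∨ #Aᶜ = 0 := by omega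
    all_goals simp [h]
  | succ n ih =>
    have h₀ := ih (slice false A)
    have h₁ := ih (slice true A)
    have hd₀ := card_le_card_sdiff_add_card (s := slice false A) (t := slice true A)
    have hd₁ := card_le_card_sdiff_add_card (s := slice true A) (t := slice false A)
    have ha₀ := card_le_two_pow (slice false A)
    have ha₁ := card_le_two_pow (slice true A)
    zify at h₀ h₁ hd₀ hd₁ ha₀ ha₁ ⊢
    rw [cast_card_compl] at h₀ h₁ ⊢
    rw [card_edgeBoundary_succ, card_eq_card_slice_add, pow_succ]
    push_cast
    refine mul_comm (2 : ℤ) (2 ^ n) ▸ isoperimetric_step h₀ h₁ ?_ ?_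
    · rw [abs_sub_le_iff]; constructor <;> linarith
    · rw [abs_sub_le_iff]; constructor <;> linarith

end Hypercube

namespace SimpleGraph

variable {V : Type*} {G : SimpleGraph V} {A C C' : Set V}

lemma mem_of_adj_of_maximal_connected (hC : Maximal (fun D ↦ D ⊆ A ∧ (G.induce D).Connected) C)
    {x y : V} (hx : x ∈ C) (hy : y ∈ A) (hxy : G.Adj x y) : y ∈ C := by
  have hconn : (G.induce (C ∪ {y})).Connected :=
    connected_induce_union hC.prop.2.preconnected .of_subsingleton hx rfl hxy
  exact hC.le_of_ge ⟨Set.union_subset hC.prop.1 (by simpa), hconn⟩ Set.subset_union_left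
    (Set.mem_union_right _ rfl)

lemma eq_of_maximal_connected_of_mem (hC : Maximal (fun D ↦ D ⊆ A ∧ (G.induce D).Connected) C)
    (hC' : Maximal (fun D ↦ D ⊆ A ∧ (G.induce D).Connected) C') {x : V} (hx : x ∈ C)
    (hx' : x ∈ C') : C = C' := by
  have hunion : C ∪ C' ⊆ A ∧ (G.induce (C ∪ C')).Connected :=
    ⟨Set.union_subset hC.prop.1 hC'.prop.1,
      induce_union_connected hC.prop.2.preconnected hC'.prop.2.preconnected ⟨x, hx, hx'⟩⟩
  exact (hC.eq_of_le hunion Set.subset_union_left).trans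
    (hC'.eq_of_le hunion Set.subset_union_right).symm

lemma exists_maximal_connected [Finite V] {x : V} (hx : x ∈ A) :
    ∃ C, Maximal (fun D ↦ D ⊆ A ∧ (G.induce D).Connected) C ∧ x ∈ C := by
  have hx' : {x} ⊆ A ∧ (G.induce {x}).Connected :=
    ⟨Set.singleton_subset_iff.2 hx, ⟨.of_subsingleton⟩⟩
  obtain ⟨C, hxC, hC⟩ :=
    Finite.exists_le_maximal (p := fun D ↦ D ⊆ A ∧ (G.induce D).Connected) hx'
  exact ⟨C, hC, hxC rfl⟩

lemma mem_iff_of_maximal_connected {κ : V → Set V}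
    (hκ : ∀ x ∈ A, Maximal (fun D ↦ D ⊆ A ∧ (G.induce D).Connected) (κ x) ∧ x ∈ κ x)
    {x y : V} (hx : x ∈ A) : y ∈ κ x ↔ y ∈ A ∧ κ y = κ x := by
  refine ⟨fun hy ↦ ?_, fun ⟨hyA, hyx⟩ ↦ hyx ▸ (hκ y hyA).2⟩
  have hyA := (hκ x hx).1.prop.1 hy
  exact ⟨hyA, eq_of_maximal_connected_of_mem (hκ y hyA).1 (hκ x hx).1 (hκ y hyA).2 hy⟩

end SimpleGraph

lemma isCompOf_iff_maximal {n : ℕ} {A C : Set (Fin n → Bool)} :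
    IsCompOf n A C ↔ Maximal (fun D ↦ D ⊆ A ∧ ((cube n).induce D).Connected) C := by
  refine ⟨fun ⟨_, hCA, hconn, hmax⟩ ↦ ⟨⟨hCA, hconn⟩, fun D hD hCD ↦ (hmax D hCD hD.1 hD.2).le⟩,
    fun hC ↦ ⟨?_, hC.prop.1, hC.prop.2, fun D hCD hDA hD ↦ hC.eq_of_ge ⟨hDA, hD⟩ hCD⟩⟩
  obtain ⟨⟨x, hx⟩⟩ := hC.prop.2.nonempty
  exact ⟨x, hx⟩

namespace Hypercube

variable {n : ℕ}

lemma card_le_card_edgeBoundary_of_two_mul_card_le {A : Finset (Fin n → Bool)}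
    (hA : 2 * #A ≤ 2 ^ n) : #A ≤ #(edgeBoundary A) := by
  have hcompl : 2 ^ n ≤ 2 * #Aᶜ := by
    have := card_add_card_compl A
    simp only [Fintype.card_fun, Fintype.card_bool, Fintype.card_fin] at this
    omega
  refine Nat.le_of_mul_le_mul_left ?_ (by positivity : 0 < 2 ^ n)
  calc 2 ^ n * #A ≤ 2 * #Aᶜ * #A := Nat.mul_le_mul_right _ hcompl
    _ = 2 * #A * #Aᶜ := by ring
    _ ≤ 2 ^ n * #(edgeBoundary A) := two_mul_card_mul_card_compl_le A

lemma card_le_card_edgeBoundary_of_isCompOf {A : Finset (Fin n → Bool)}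
    (hA : ∀ C, IsCompOf n A C → 2 * C.ncard ≤ 2 ^ n) : #A ≤ #(edgeBoundary A) := by
  classical
  choose! κ hκ using fun x (hx : x ∈ (A : Set (Fin n → Bool))) ↦
    (cube n).exists_maximal_connected hx
  have hfiber : ∀ x ∈ A, (({y ∈ A | κ y = κ x} : Finset _) : Set _) = κ x := fun x hx ↦ by
    ext y
    simp [SimpleGraph.mem_iff_of_maximal_connected hκ hx]
  have hboundary : ∀ x ∈ A,
      edgeBoundary {y ∈ A | κ y = κ x} = {p ∈ edgeBoundary A | κ p.1 = κ x} := by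
    intro x hx
    ext ⟨y, i⟩
    simp only [mem_edgeBoundary, mem_filter, not_and]
    constructor
    · rintro ⟨⟨hyA, hyx⟩, hflip⟩
      refine ⟨⟨hyA, fun hflipA ↦ hflip hflipA ?_⟩, hyx⟩
      have hy : y ∈ κ x := (SimpleGraph.mem_iff_of_maximal_connected hκ hx).2 ⟨hyA, hyx⟩
      exact ((SimpleGraph.mem_iff_of_maximal_connected hκ hx).1
        (SimpleGraph.mem_of_adj_of_maximal_connected (hκ x hx).1 hy hflipA
          (cube_adj_flipAt n y i))).2
    · rintro ⟨⟨hyA, hflip⟩, hyx⟩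
      exact ⟨⟨hyA, hyx⟩, fun hflipA ↦ absurd hflipA hflip⟩
  calc #A = ∑ c ∈ A.image κ, #{y ∈ A | κ y = c} := card_eq_sum_card_image κ A
    _ ≤ ∑ c ∈ A.image κ, #{p ∈ edgeBoundary A | κ p.1 = c} := by
      refine sum_le_sum fun c hc ↦ ?_
      obtain ⟨x, hx, rfl⟩ := mem_image.1 hc
      rw [← hboundary x hx]
      refine card_le_card_edgeBoundary_of_two_mul_card_le ?_
      have := hA _ (isCompOf_iff_maximal.2 (hfiber x hx ▸ (hκ x hx).1))
      rwa [Set.ncard_coe_finset] at this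
    _ = #(edgeBoundary A) := by
      refine (card_eq_sum_card_fiberwise fun p hp ↦ mem_image_of_mem κ ?_).symm
      exact (mem_edgeBoundary.1 (mem_coe.1 hp)).1

lemma two_pow_le_card_mul_succ {T : Finset (Fin n → Bool)}
    (hT : ∀ C, IsCompOf n ↑Tᶜ C → 2 * C.ncard ≤ 2 ^ n) : 2 ^ n ≤ #T * (n + 1) := by
  have hcompl := card_le_card_edgeBoundary_of_isCompOf hT
  rw [card_edgeBoundary_compl] at hcompl
  have hboundary := card_edgeBoundary_le T
  have htotal : #T + #Tᶜ = 2 ^ n := by simp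
  linarith

end Hypercube

/-- Giant-component lemma: if `|S| < 2^n/(n²+1)` then the largest connected
component of the complement of `S` in the hypercube has more than `2^{n-1}` vertices. -/
theorem stmt0 (n : ℕ) (S : Set (Fin n → Bool))
    (hS : (S.ncard : ℝ) < 2 ^ n / (n ^ 2 + 1)) :
    ∃ C : Set (Fin n → Bool), IsCompOf n Sᶜ C ∧ (C.ncard : ℝ) > 2 ^ n / 2 := by
  classical
  by_contra! hsmall
  have hcomp : ∀ C, IsCompOf n ↑S.toFinsetᶜ C → 2 * C.ncard ≤ 2 ^ n := by
    intro C hC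
    rw [coe_compl, Set.coe_toFinset] at hC
    have := hsmall C hC
    rw [le_div_iff₀ two_pos] at this
    exact_mod_cast (by linarith : (2 * C.ncard : ℝ) ≤ 2 ^ n)
  have hcount := Hypercube.two_pow_le_card_mul_succ hcomp
  rw [← Set.ncard_eq_toFinset_card'] at hcount
  have hn : n + 1 ≤ n ^ 2 + 1 := by nlinarith
  rw [lt_div_iff₀ (by positivity)] at hS
  have : (2 : ℝ) ^ n ≤ S.ncard * (n ^ 2 + 1) := by
    exact_mod_cast hcount.trans (Nat.mul_le_mul_left _ hn)
  linarith
end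

section
/- The edge expansion of the n-dimensional hypercube graph is at least 1/n; that is, for every nonempty proper subset T of vertices, the number of edges between T and its complement is at least (1/n)·min(|T|, 2^n − |T|). -/
/-- Interpolating sequence between `x` and `y`. -/
def zse (n : ℕ) (x y : Fin n → Bool) (k : ℕ) : Fin n → Bool :=
  fun j => if (j : ℕ) < k then y j else x j

lemma zse_zero (n : ℕ) (x y : Fin n → Bool) : zse n x y 0 = x := by
  funext j; simp [zse]

lemma zse_of_ge (n : ℕ) (x y : Fin n → Bool) {k : ℕ} (hk : n ≤ k) : zse n x y k = y := by
  funext j; simp [zse, lt_of_lt_of_le j.isLt hk]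

lemma descent (n : ℕ) (T : Set (Fin n → Bool)) {x y : Fin n → Bool}
    (hx : x ∈ T) (hy : y ∉ T) :
    ∃ k, zse n x y k ∈ T ∧ zse n x y (k + 1) ∉ T := by
  by_contra h
  push_neg at h
  have hall : ∀ k, zse n x y k ∈ T := by
    intro k
    induction k with
    | zero => rwa [zse_zero]
    | succ k ih => exact h k ih
  have := hall n
  rw [zse_of_ge n x y le_rfl] at this
  exact hy this

lemma step_lt (n : ℕ) (T : Set (Fin n → Bool)) {x y : Fin n → Bool} {k : ℕ}
    (h1 : zse n x y k ∈ T) (h2 : zse n x y (k + 1) ∉ T) : k < n := by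
  by_contra hk
  push_neg at hk
  rw [zse_of_ge n x y hk] at h1
  rw [zse_of_ge n x y (le_trans hk (Nat.le_succ k))] at h2
  exact h2 h1

lemma step_flip (n : ℕ) (T : Set (Fin n → Bool)) {x y : Fin n → Bool} {k : ℕ}
    (h1 : zse n x y k ∈ T) (h2 : zse n x y (k + 1) ∉ T) (hkn : k < n) :
    zse n x y (k + 1) = flipAt n (zse n x y k) ⟨k, hkn⟩ := by
  have hxy : y ⟨k, hkn⟩ = !(x ⟨k, hkn⟩) := by
    rcases Bool.eq_or_eq_not (y ⟨k, hkn⟩) (x ⟨k, hkn⟩) with he | he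
    · exfalso
      have : zse n x y (k + 1) = zse n x y k := by
        funext j
        simp only [zse]
        rcases lt_trichotomy (j : ℕ) k with hj | hj | hj
        · simp [hj, Nat.lt_succ_of_lt hj]
        · have hjk : j = ⟨k, hkn⟩ := Fin.ext hj
          subst hjk
          simp [he]
        · have hj1 : ¬ ((j : ℕ) < k) := by omega
          have hj2 : ¬ ((j : ℕ) < k + 1) := by omega
          simp [hj1, hj2]
      rw [this] at h2
      exact h2 h1
    · exact he
  funext j
  simp only [flipAt, Function.update_apply, zse]
  by_cases hj : j = ⟨k, hkn⟩
  · subst hj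
    simp [hxy]
  · have hjk : (j : ℕ) ≠ k := fun h => hj (Fin.ext h)
    simp only [hj, if_neg hj]
    have : ((j : ℕ) < k + 1) ↔ ((j : ℕ) < k) := by omega
    simp [this]

lemma ncard_prod' {α β : Type*} (s : Set α) (t : Set β) :
    (s ×ˢ t).ncard = s.ncard * t.ncard := by
  rw [← Nat.card_coe_set_eq, ← Nat.card_coe_set_eq, ← Nat.card_coe_set_eq,
    ← Nat.card_prod]
  exact Nat.card_congr (Equiv.Set.prod s t)

/-- The edge expansion of the hypercube is at least `1/n`: for every nonempty proper
subset `T`, the number of edges between `T` and its complement (counted as ordered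
pairs with first coordinate in `T`) is at least `(1/n) · min(|T|, 2^n − |T|)`. -/
theorem stmt1 (n : ℕ) (T : Set (Fin n → Bool)) (hne : T.Nonempty) (hproper : T ≠ Set.univ) :
    ({p : (Fin n → Bool) × (Fin n → Bool) |
        p.1 ∈ T ∧ p.2 ∉ T ∧ (cube n).Adj p.1 p.2}.ncard : ℝ) ≥
      (1 / n) * min (T.ncard : ℝ) ((2 : ℝ) ^ n - T.ncard) := by
  classical
  -- n = 0 is impossible
  rcases Nat.eq_zero_or_pos n with hn0 | hnpos
  · exfalso
    subst hn0
    obtain ⟨x, hx⟩ := hne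
    apply hproper
    apply Set.eq_univ_iff_forall.mpr
    intro z
    have : z = x := by funext j; exact j.elim0
    rwa [this]
  obtain ⟨x0, hx0⟩ := hne
  obtain ⟨y0, hy0⟩ := Set.ne_univ_iff_exists_notMem T |>.mp hproper
  set B : Set ((Fin n → Bool) × (Fin n → Bool)) := {p : (Fin n → Bool) × (Fin n → Bool) | p.1 ∈ T ∧ p.2 ∉ T ∧ (cube n).Adj p.1 p.2} with hB
  -- boundary pair from any x ∈ T, y ∉ T
  have bdry : ∀ {x y : Fin n → Bool}, x ∈ T → y ∉ T →
      ∀ k, zse n x y k ∈ T → zse n x y (k + 1) ∉ T →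
      (zse n x y k, zse n x y (k + 1)) ∈ B := by
    intro x y hx hy k h1 h2
    have hkn := step_lt n T h1 h2
    have hf := step_flip n T h1 h2 hkn
    have hadj : (cube n).Adj (zse n x y k) (zse n x y (k + 1)) := by
      rw [cube, SimpleGraph.fromRel_adj]
      exact ⟨fun he => h2 (he ▸ h1), Or.inl ⟨⟨k, hkn⟩, hf⟩⟩
    exact ⟨h1, h2, hadj⟩
  -- B is nonempty
  obtain ⟨k0, hk01, hk02⟩ := descent n T hx0 hy0
  have hBne : B.Nonempty := ⟨_, bdry hx0 hy0 k0 hk01 hk02⟩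
  -- key counting: |T| * |Tᶜ| ≤ |B| * 2^n
  have key : T.ncard * Tᶜ.ncard ≤ B.ncard * 2 ^ n := by
    have : (T ×ˢ Tᶜ).ncard ≤ (B ×ˢ (Set.univ : Set (Fin n → Bool))).ncard := by
      set F : (Fin n → Bool) × (Fin n → Bool) → ((Fin n → Bool) × (Fin n → Bool)) × (Fin n → Bool) := fun p =>
        if h : p.1 ∈ T ∧ p.2 ∉ T then
          (fun k => ((zse n p.1 p.2 k, zse n p.1 p.2 (k + 1)),
            fun j : Fin n => if (j : ℕ) < k then p.1 j else p.2 j))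
            (Classical.choose (descent n T h.1 h.2))
        else ((p.1, p.1), p.1) with hF
      apply Set.ncard_le_ncard_of_injOn F
      · rintro ⟨x, y⟩ ⟨hx, hy⟩
        have hy' : y ∉ T := hy
        simp only [hF, dif_pos (And.intro hx hy')]
        obtain ⟨h1, h2⟩ := Classical.choose_spec (descent n T hx hy')
        exact ⟨bdry hx hy' _ h1 h2, Set.mem_univ _⟩
      · rintro ⟨x, y⟩ ⟨hx, hy⟩ ⟨x', y'⟩ ⟨hx', hy'⟩ heq
        have hy2 : y ∉ T := hy
        have hy2' : y' ∉ T := hy'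
        simp only [hF, dif_pos (And.intro hx hy2), dif_pos (And.intro hx' hy2')] at heq
        set k := Classical.choose (descent n T hx hy2) with hkdef
        set k' := Classical.choose (descent n T hx' hy2') with hkdef'
        obtain ⟨h1, h2⟩ := Classical.choose_spec (descent n T hx hy2)
        obtain ⟨h1', h2'⟩ := Classical.choose_spec (descent n T hx' hy2')
        rw [← hkdef] at h1 h2
        rw [← hkdef'] at h1' h2'
        have hkn := step_lt n T h1 h2
        have hkn' := step_lt n T h1' h2'
        have hf := step_flip n T h1 h2 hkn
        have hf' := step_flip n T h1' h2' hkn'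
        have hu : zse n x y k = zse n x' y' k' := congrArg (fun q => q.1.1) heq
        have hv : zse n x y (k + 1) = zse n x' y' (k' + 1) := congrArg (fun q => q.1.2) heq
        have hw : (fun j : Fin n => if (j : ℕ) < k then x j else y j) =
            (fun j : Fin n => if (j : ℕ) < k' then x' j else y' j) :=
          congrArg (fun q => q.2) heq
        -- the flipped coordinate is determined, so k = k'
        have hkk : k = k' := by
          by_contra hne
          have hdiff : zse n x y k ⟨k', hkn'⟩ = zse n x y (k + 1) ⟨k', hkn'⟩ := by
            rw [hf]
            simp only [flipAt]
            rw [Function.update_of_ne (fun h => hne (by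
              have := congrArg (Fin.val) h; simpa using this.symm))]
          have hdiff' : zse n x' y' k' ⟨k', hkn'⟩ ≠ zse n x' y' (k' + 1) ⟨k', hkn'⟩ := by
            rw [hf']
            simp [flipAt]
          rw [hu, hv] at hdiff
          exact hdiff' hdiff
        clear_value k k'
        subst hkk
        have hx12 : x = x' := by
          funext j
          by_cases hj : (j : ℕ) < k
          · have := congrFun hw j
            simpa [hj] using this
          · have := congrFun hu j
            simpa [zse, hj] using this
        have hy12 : y = y' := by
          funext j
          by_cases hj : (j : ℕ) < k + 1
          · have := congrFun hv j
            simpa [zse, hj] using this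
          · have hj' : ¬ (j : ℕ) < k := fun h => hj (Nat.lt_succ_of_lt h)
            have := congrFun hw j
            simpa [hj'] using this
        rw [Prod.ext_iff]
        exact ⟨hx12, hy12⟩
    rw [ncard_prod', ncard_prod'] at this
    have huniv : (Set.univ : Set (Fin n → Bool)).ncard = 2 ^ n := by
      simp [Set.ncard_univ, Nat.card_eq_fintype_card]
    rwa [huniv] at this
  -- cardinality of complement
  have hcompl : T.ncard + Tᶜ.ncard = 2 ^ n := by
    rw [Set.ncard_add_ncard_compl]
    simp [Set.ncard_univ, Nat.card_eq_fintype_card]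
  -- pass to the reals
  have hBpos : 1 ≤ B.ncard := (Set.ncard_pos (Set.toFinite _)).mpr hBne
  have hTpos : 1 ≤ T.ncard := (Set.ncard_pos (Set.toFinite _)).mpr ⟨x0, hx0⟩
  have hTcpos : 1 ≤ Tᶜ.ncard := (Set.ncard_pos (Set.toFinite _)).mpr ⟨y0, hy0⟩
  set a : ℝ := (T.ncard : ℝ) with ha
  set c : ℝ := (Tᶜ.ncard : ℝ) with hc
  set Bc : ℝ := (B.ncard : ℝ) with hbc
  have h1 : a * c ≤ Bc * 2 ^ n := by
    have := key
    calc a * c = ((T.ncard * Tᶜ.ncard : ℕ) : ℝ) := by push_cast; ring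
    _ ≤ ((B.ncard * 2 ^ n : ℕ) : ℝ) := by exact_mod_cast this
    _ = Bc * 2 ^ n := by push_cast; ring
  have h2 : a + c = 2 ^ n := by
    calc a + c = ((T.ncard + Tᶜ.ncard : ℕ) : ℝ) := by push_cast; ring
    _ = 2 ^ n := by rw [hcompl]; push_cast; ring
  have h3 : (1 : ℝ) ≤ a := by rw [ha]; exact_mod_cast hTpos
  have h4 : (1 : ℝ) ≤ c := by rw [hc]; exact_mod_cast hTcpos
  have h5 : (1 : ℝ) ≤ Bc := by rw [hbc]; exact_mod_cast hBpos
  have hrw : (2 : ℝ) ^ n - a = c := by linarith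
  rw [hrw]
  have hnR : (1 : ℝ) ≤ (n : ℝ) := by exact_mod_cast hnpos
  rw [ge_iff_le, one_div, inv_mul_le_iff₀ (by linarith)]
  -- goal : min a c ≤ n * Bc
  rcases Nat.lt_or_ge n 2 with hn2 | hn2
  · -- n = 1
    have hn1 : n = 1 := by omega
    have hp : (2 : ℝ) ^ n = 2 := by rw [hn1]; norm_num
    have hnn : (n : ℝ) = 1 := by rw [hn1]; norm_num
    rw [hnn, one_mul]
    have hmin : min a c ≤ 1 := by
      rcases le_total a c with h | h
      · rw [min_eq_left h]; rw [hp] at h2; linarith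
      · rw [min_eq_right h]; rw [hp] at h2; linarith
    linarith
  · have hn2R : (2 : ℝ) ≤ (n : ℝ) := by exact_mod_cast hn2
    have hpow : (0 : ℝ) < 2 ^ n := by positivity
    rcases le_total a c with h | h
    · rw [min_eq_left h]
      nlinarith [mul_le_mul_of_nonneg_left h (by linarith : (0:ℝ) ≤ a)]
    · rw [min_eq_right h]
      nlinarith [mul_le_mul_of_nonneg_left h (by linarith : (0:ℝ) ≤ c)]
end

section
/- In a binary-action game the set of correlated equilibria coincides with the set of coarse correlated equilibria. -/
/-- `σ` is a correlated equilibrium of the binary-action game with utilities `u`: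
for every player `i` and action `a`,
`Σ_{s : s i = a} (u i s − u i (s¬i)) · σ s ≥ 0`. -/
def IsCE (n : ℕ) (u : Fin n → (Fin n → Bool) → ℝ) (σ : (Fin n → Bool) → ℝ) : Prop :=
  ∀ (i : Fin n) (a : Bool),
    0 ≤ ∑ s : Fin n → Bool, if s i = a then (u i s - u i (flipAt n s i)) * σ s else 0

/-- `σ` is a coarse correlated equilibrium: for every player `i` and fixed action `a`,
`E_{s∼σ}[u_i(s)] ≥ E_{s∼σ}[u_i(a, s_{-i})]`. -/
def IsCCE (n : ℕ) (u : Fin n → (Fin n → Bool) → ℝ) (σ : (Fin n → Bool) → ℝ) : Prop :=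
  ∀ (i : Fin n) (a : Bool),
    ∑ s : Fin n → Bool, u i (Function.update s i a) * σ s ≤
      ∑ s : Fin n → Bool, u i s * σ s

/-- In binary-action games the set of correlated equilibria coincides with the set
of coarse correlated equilibria. -/
theorem stmt5 (n : ℕ) (u : Fin n → (Fin n → Bool) → ℝ) (σ : (Fin n → Bool) → ℝ)
    (hnn : ∀ s, 0 ≤ σ s) (hsum : ∑ s : Fin n → Bool, σ s = 1) :
    IsCE n u σ ↔ IsCCE n u σ := by
  have key : ∀ (i : Fin n) (a : Bool),
      (∑ s : Fin n → Bool, u i s * σ s)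
        - ∑ s : Fin n → Bool, u i (Function.update s i a) * σ s
      = ∑ s : Fin n → Bool, if s i = !a then (u i s - u i (flipAt n s i)) * σ s else 0 := by
    intro i a
    rw [← Finset.sum_sub_distrib]
    apply Finset.sum_congr rfl
    intro s _
    by_cases h : s i = a
    · have h1 : Function.update s i a = s := by rw [← h, Function.update_eq_self]
      have h2 : ¬ (s i = !a) := by rw [h]; simp
      simp [h1, h2]
    · have h3 : s i = !a := by
        cases a <;> cases hsi : s i <;> simp_all
      have h4 : flipAt n s i = Function.update s i a := by
        unfold flipAt; rw [h3]; simp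
      rw [if_pos h3, h4, sub_mul]
  constructor
  · intro hce i a
    have := key i a
    have h0 := hce i (!a)
    linarith [this, h0]
  · intro hcce i a
    have := key i (!a)
    have h0 := hcce i (!a)
    simp only [Bool.not_not] at this
    linarith
end
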